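/- arXiv:math/0311291 — 2 statements merged into one kernel-verified Lean document; each statement's English description precedes it below -/
import Mathlib

section
/- Let V be a finite-dimensional vector space over an algebraically closed field k of characteristic 0, and let T be a linear automorphism of V such that Tr(T) = 0 and the order of T equals q^n for some prime q and positive integer n. Then q divides dim(V). -/
/-!
Every eigenvalue of `T` is a power `ζ ^ e` of a fixed primitive `q ^ n`-th root of unity `ζ`, so
the vanishing trace says that `ζ` is a root of the integer polynomial `P = ∑ X ^ e` taken over the
eigenvalues with multiplicity. Hence the cyclotomic polynomial `Φ_{q^n}`, the minimal polynomial
of `ζ` over `ℤ`, divides `P`, and evaluating at `1` gives `Φ_{q^n}(1) = q ∣ P(1) = dim V`.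
-/

open Polynomial Module

lemma Module.End.pow_eq_one_of_isRoot_charpoly {K V : Type*} [Field K] [AddCommGroup V]
    [Module K V] [FiniteDimensional K V] {f : End K V} {m : ℕ} (hf : f ^ m = 1) {μ : K}
    (hμ : f.charpoly.IsRoot μ) : μ ^ m = 1 := by
  obtain ⟨v, hv⟩ := ((f.hasEigenvalue_iff_isRoot_charpoly μ).2 hμ).exists_hasEigenvector
  have hfv : μ ^ m • v = (1 : K) • v := by rw [← hv.pow_apply, hf, one_smul, End.one_apply]
  exact smul_left_injective K hv.2 hfv

theorem IsPrimitiveRoot.cyclotomic_eval_one_dvd_card_of_sum_eq_zero {K : Type*} [Field K]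
    [CharZero K] {m : ℕ} {ζ : K} (hζ : IsPrimitiveRoot ζ m) (hm : 0 < m)
    {s : Multiset K} (hs : ∀ μ ∈ s, μ ^ m = 1) (hsum : s.sum = 0) :
    (cyclotomic m ℤ).eval 1 ∣ Multiset.card s := by
  have : NeZero m := ⟨hm.ne'⟩
  set e : K → ℕ := Function.invFun (ζ ^ ·)
  have he : ∀ μ ∈ s, ζ ^ e μ = μ := fun μ hμ ↦ by
    obtain ⟨i, -, hi⟩ := hζ.eq_pow_of_pow_eq_one (hs μ hμ)
    exact Function.invFun_eq ⟨i, hi⟩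
  set P : ℤ[X] := (s.map fun μ ↦ X ^ e μ).sum
  have hP : aeval ζ P = 0 := by
    simp only [P, map_multiset_sum, Multiset.map_map, Function.comp_def, map_pow, aeval_X]
    rwa [Multiset.map_congr rfl he, Multiset.map_id']
  have hP1 : P.eval 1 = Multiset.card s := by simp [P, eval_multisetSum]
  obtain ⟨c, hc⟩ : cyclotomic m ℤ ∣ P := by
    rw [cyclotomic_eq_minpoly hζ hm]
    exact minpoly.isIntegrallyClosed_dvd (hζ.isIntegral hm) hP
  exact ⟨c.eval 1, by rw [← hP1, hc, eval_mul]⟩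

theorem Module.End.cyclotomic_eval_one_dvd_finrank_of_trace_eq_zero {K V : Type*} [Field K]
    [IsAlgClosed K] [CharZero K] [AddCommGroup V] [Module K V] [FiniteDimensional K V]
    {f : End K V} {m : ℕ} (hm : 0 < m) (hf : f ^ m = 1) (htr : LinearMap.trace K V f = 0) :
    (cyclotomic m ℤ).eval 1 ∣ finrank K V := by
  have : NeZero (m : K) := ⟨Nat.cast_ne_zero.2 hm.ne'⟩
  obtain ⟨ζ, hζ⟩ := HasEnoughRootsOfUnity.exists_primitiveRoot K m
  have hsplits := IsAlgClosed.splits f.charpoly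
  have hcard : Multiset.card f.charpoly.roots = finrank K V := by
    rw [splits_iff_card_roots.1 hsplits, LinearMap.charpoly_natDegree]
  rw [← hcard]
  refine hζ.cyclotomic_eval_one_dvd_card_of_sum_eq_zero hm
    (fun μ hμ ↦ pow_eq_one_of_isRoot_charpoly hf (isRoot_of_mem_roots hμ)) ?_
  rwa [← trace_eq_sum_roots_charpoly_of_splits hsplits]

theorem Nat.Prime.dvd_eval_one_cyclotomic_pow {q : ℕ} (hq : q.Prime) (n : ℕ) :
    (q : ℤ) ∣ (cyclotomic (q ^ n) ℤ).eval 1 := by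
  have : Fact q.Prime := ⟨hq⟩
  cases n with
  | zero => simp -- `Φ₁(1) = 0`
  | succ n => rw [eval_one_cyclotomic_prime_pow]

theorem stmt_0_general (k : Type*) [Field k] [IsAlgClosed k] [CharZero k]
    (V : Type*) [AddCommGroup V] [Module k V] [FiniteDimensional k V]
    (T : V ≃ₗ[k] V) (q n : ℕ) (hq : Nat.Prime q)
    (htr : LinearMap.trace k V (T : V →ₗ[k] V) = 0)
    (hord : orderOf T = q ^ n) :
    q ∣ Module.finrank k V := by
  have hT : (T : End k V) ^ q ^ n = 1 := by
    rw [← hord]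
    simpa only [map_pow, map_one, LinearEquiv.automorphismGroup.toLinearMapMonoidHom_apply]
      using congrArg LinearEquiv.automorphismGroup.toLinearMapMonoidHom (pow_orderOf_eq_one T)
  exact Int.natCast_dvd_natCast.1 <| (hq.dvd_eval_one_cyclotomic_pow n).trans <|
    End.cyclotomic_eval_one_dvd_finrank_of_trace_eq_zero (pow_pos hq.pos n) hT htr

theorem stmt_0 (k : Type*) [Field k] [IsAlgClosed k] [CharZero k]
    (V : Type*) [AddCommGroup V] [Module k V] [FiniteDimensional k V]
    (T : V ≃ₗ[k] V) (q n : ℕ) (hq : Nat.Prime q) (hn : 0 < n)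
    (htr : LinearMap.trace k V (T : V →ₗ[k] V) = 0)
    (hord : orderOf T = q ^ n) :
    q ∣ Module.finrank k V :=
  stmt_0_general k V T q n hq htr hord
end

section
/- Let A be a finite-dimensional associative unital algebra over a field k of characteristic 0, let σ be a k-algebra automorphism of A with σ ∘ σ = id and σ ≠ id, and let λ : A → k be a linear functional such that (a, b) ↦ λ(ab) is a non-degenerate bilinear form on A and λ(ab) = λ(σ(b)·a) for all a, b ∈ A. If Tr(σ) = 0, then 4 divides dim_k(A). -/
open Module LinearMap

/-- A nondegenerate alternating bilinear form forces even dimension (char 0). -/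
lemma alt_nondeg_even {k V : Type*} [Field k] [CharZero k] [AddCommGroup V] [Module k V]
    [FiniteDimensional k V] (B : V →ₗ[k] V →ₗ[k] k) (halt : ∀ x, B x x = 0)
    (hnd : ∀ x : V, (∀ y : V, B y x = 0) → x = 0) : Even (finrank k V) := by
  classical
  have hskew : ∀ x y : V, B y x = - B x y := by
    intro x y
    have h := halt (x + y)
    simp only [map_add, LinearMap.add_apply, halt] at h
    linear_combination h
  by_contra hodd
  rw [Nat.not_even_iff_odd] at hodd
  set n := finrank k V with hn
  let b : Basis (Fin n) k V := Module.finBasis k V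
  let M : Matrix (Fin n) (Fin n) k := LinearMap.toMatrix₂ b b B
  have hdet : M.det = 0 := by
    have hT : M.transpose = -M := by
      ext i j
      simp only [Matrix.transpose_apply, Matrix.neg_apply, M, LinearMap.toMatrix₂_apply]
      exact hskew _ _
    have h1 : M.det = (-M).det := by rw [← hT, Matrix.det_transpose]
    rw [Matrix.det_neg, Fintype.card_fin, hodd.neg_one_pow] at h1
    have : (2 : k) * M.det = 0 := by ring_nf; linear_combination h1
    rcases mul_eq_zero.mp this with h | h
    · exact absurd h two_ne_zero
    · exact h
  obtain ⟨v, hv, hMv⟩ := (Matrix.exists_mulVec_eq_zero_iff).mpr hdet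
  set x : V := ∑ j, v j • b j with hx
  have hBx : ∀ i, B (b i) x = 0 := by
    intro i
    have := congrFun hMv i
    simp only [Matrix.mulVec, dotProduct, M, LinearMap.toMatrix₂_apply] at this
    calc B (b i) x = ∑ j, B (b i) (b j) * v j := by
          simp [hx, map_sum, mul_comm]
      _ = 0 := this
  have hflip : (B.flip x) = 0 := b.ext fun i => by
    simpa using hBx i
  have hx0 : x = 0 := hnd x fun y => by
    have := LinearMap.congr_fun hflip y
    simpa using this
  have : ∀ j, v j = 0 := by
    have hli := b.linearIndependent
    rw [Fintype.linearIndependent_iff] at hli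
    exact hli v (by rw [← hx]; exact hx0)
  exact hv (funext this)

theorem stmt_6 (k : Type*) [Field k] [CharZero k]
    (A : Type*) [Ring A] [Algebra k A] [FiniteDimensional k A]
    (σ : A ≃ₐ[k] A) (hσ2 : ∀ x : A, σ (σ x) = x) (hσne : ∃ x : A, σ x ≠ x)
    (l : A →ₗ[k] k)
    (hndl : ∀ a : A, (∀ b : A, l (a * b) = 0) → a = 0)
    (hndr : ∀ b : A, (∀ a : A, l (a * b) = 0) → b = 0)
    (hint : ∀ a b : A, l (a * b) = l (σ b * a))
    (htr : LinearMap.trace k A (σ : A →ₗ[k] A) = 0) :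
    4 ∣ Module.finrank k A := by
  classical
  -- σ-invariance of the form
  have hinv : ∀ u v : A, l (u * v) = l (σ u * σ v) := fun u v => by
    rw [hint u v, hint (σ v) u]
  set f : A →ₗ[k] A := (σ : A →ₗ[k] A) with hf
  have hfapp : ∀ x : A, f x = σ x := fun x => rfl
  -- the (-1)-eigenspace of σ
  set W : Submodule k A := LinearMap.ker (f + LinearMap.id) with hW
  have hmemW : ∀ x : A, x ∈ W ↔ σ x = -x := by
    intro x
    simp only [hW, LinearMap.mem_ker, LinearMap.add_apply, LinearMap.id_apply, hfapp]
    constructor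
    · intro h; exact eq_neg_of_add_eq_zero_left h
    · intro h; rw [h]; abel
  -- projection onto W
  set q : A →ₗ[k] A := (2⁻¹ : k) • (LinearMap.id - f) with hq
  have hqapp : ∀ x : A, q x = (2⁻¹ : k) • (x - σ x) := fun x => rfl
  have hproj : LinearMap.IsProj W q := by
    constructor
    · intro x
      rw [hmemW, hqapp, map_smul, map_sub, hσ2, ← smul_neg, neg_sub]
    · intro x hx
      rw [hqapp, (hmemW x).mp hx, sub_neg_eq_add, ← two_smul k x, smul_smul,
        inv_mul_cancel₀ (two_ne_zero), one_smul]
  -- trace computation : dim A = 2 * dim W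
  have htrq : LinearMap.trace k A q = (finrank k W : k) := hproj.trace
  have htrq' : LinearMap.trace k A q = (2⁻¹ : k) * (finrank k A : k) := by
    rw [hq, map_smul, map_sub, LinearMap.trace_id, htr, sub_zero, smul_eq_mul]
  have hdim : (finrank k A : ℕ) = 2 * finrank k W := by
    have : ((2 * finrank k W : ℕ) : k) = ((finrank k A : ℕ) : k) := by
      push_cast
      rw [← htrq, htrq']
      ring
    exact_mod_cast this.symm
  -- the bilinear form restricted to W
  set B : A →ₗ[k] A →ₗ[k] k := (LinearMap.mul k A).compr₂ l with hB
  have hBapp : ∀ a b : A, B a b = l (a * b) := fun a b => rfl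
  set Bw : W →ₗ[k] W →ₗ[k] k := (B.comp W.subtype).compl₂ W.subtype with hBw
  have hBwapp : ∀ x y : W, Bw x y = l ((x : A) * (y : A)) := fun x y => rfl
  -- alternating
  have halt : ∀ x : W, Bw x x = 0 := by
    intro x
    have hx := (hmemW (x : A)).mp x.2
    have h1 : l ((x : A) * (x : A)) = - l ((x : A) * (x : A)) := by
      conv_lhs => rw [hint, hx, neg_mul, map_neg]
    have h2 : (2 : k) * l ((x : A) * (x : A)) = 0 := by linear_combination h1
    rw [hBwapp]
    rcases mul_eq_zero.mp h2 with h | h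
    · exact absurd h two_ne_zero
    · exact h
  -- nondegenerate (on the right)
  have hnd : ∀ x : W, (∀ y : W, Bw y x = 0) → x = 0 := by
    intro x hx0
    have hx := (hmemW (x : A)).mp x.2
    have : ∀ a : A, l (a * (x : A)) = 0 := by
      intro a
      have hdecomp : a = (2⁻¹ : k) • (a + σ a) + (2⁻¹ : k) • (a - σ a) := by
        rw [← smul_add, add_add_sub_cancel, ← two_smul k a, smul_smul,
          inv_mul_cancel₀ (two_ne_zero), one_smul]
      have hmem : (2⁻¹ : k) • (a - σ a) ∈ W := by
        rw [hmemW, map_smul, map_sub, hσ2, ← smul_neg, neg_sub]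
      have hminus : l (((2⁻¹ : k) • (a - σ a)) * (x : A)) = 0 := hx0 ⟨_, hmem⟩
      have hplus : l (((2⁻¹ : k) • (a + σ a)) * (x : A)) = 0 := by
        set p : A := (2⁻¹ : k) • (a + σ a) with hp
        have hsp : σ p = p := by
          rw [hp, map_smul, map_add, hσ2, add_comm]
        have h1 : l (p * (x : A)) = - l (p * (x : A)) := by
          conv_lhs => rw [hinv, hsp, hx, mul_neg, map_neg]
        have h2 : (2 : k) * l (p * (x : A)) = 0 := by linear_combination h1
        rcases mul_eq_zero.mp h2 with h | h
        · exact absurd h two_ne_zero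
        · exact h
      calc l (a * (x : A))
          = l ((((2⁻¹ : k) • (a + σ a)) + ((2⁻¹ : k) • (a - σ a))) * (x : A)) := by
            rw [← hdecomp]
        _ = 0 := by rw [add_mul, map_add, hplus, hminus, add_zero]
    exact Subtype.ext (hndr _ this)
  -- conclude
  have heven : Even (finrank k W) := alt_nondeg_even Bw halt hnd
  obtain ⟨m, hm⟩ := heven
  rw [hdim, hm]
  exact ⟨m, by ring⟩
end
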